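/- arXiv:1807.05692 — 2 statements merged into one kernel-verified Lean document; each statement's English description precedes it below -/
import Mathlib

section
/- For real numbers $x_0, x_1, \ldots, x_N$ define $x_N^* := \max_{0 \le k \le N} |x_k|$ and $[x]_N := x_0^2 + \sum_{k=0}^{N-1}(x_{k+1}-x_k)^2$. Then there exists a sequence of functions $f_k : \mathbb{R}^{k+1} \to \mathbb{R}$ with $|f_k| \le 2$ such that for all real sequences $(x_k)$ and all $N \ge 0$, $x_N^* \le 6\sqrt{[x]_N} + \sum_{k=0}^{N-1} f_k(x_0,\ldots,x_k)(x_{k+1}-x_k)$. -/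
open Finset


private noncomputable def Qv (x : ℕ → ℝ) (n : ℕ) : ℝ :=
  (x 0) ^ 2 + ∑ k ∈ Finset.range n, (x (k + 1) - x k) ^ 2

private noncomputable def Mx (x : ℕ → ℝ) (n : ℕ) : ℝ :=
  (Finset.range (n + 1)).sup' ⟨0, by simp⟩ (fun k => |x k|)

private noncomputable def sx (x : ℕ → ℝ) (n : ℕ) : ℝ :=
  max (Mx x n) (Real.sqrt (Qv x n))

private lemma Qv_nonneg (x : ℕ → ℝ) (n : ℕ) : 0 ≤ Qv x n := by
  unfold Qv; positivity

private lemma abs_le_Mx (x : ℕ → ℝ) {k n : ℕ} (h : k ≤ n) : |x k| ≤ Mx x n :=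
  Finset.le_sup' (fun k => |x k|) (Finset.mem_range.mpr (Nat.lt_succ_of_le h))

private lemma Mx_nonneg (x : ℕ → ℝ) (n : ℕ) : 0 ≤ Mx x n :=
  (abs_nonneg _).trans (abs_le_Mx x (Nat.zero_le n))

private lemma sx_nonneg (x : ℕ → ℝ) (n : ℕ) : 0 ≤ sx x n :=
  (Mx_nonneg x n).trans (le_max_left _ _)

private lemma Qv_succ (x : ℕ → ℝ) (n : ℕ) :
    Qv x (n + 1) = Qv x n + (x (n + 1) - x n) ^ 2 := by
  unfold Qv; rw [Finset.sum_range_succ]; ring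

private lemma Mx_succ (x : ℕ → ℝ) (n : ℕ) :
    Mx x (n + 1) = max (|x (n + 1)|) (Mx x n) := by
  unfold Mx
  apply le_antisymm
  · apply Finset.sup'_le
    intro k hk
    rcases Nat.lt_succ_iff_lt_or_eq.mp (Finset.mem_range.mp hk) with h | h
    · exact le_max_of_le_right (Finset.le_sup' (fun k => |x k|) (Finset.mem_range.mpr h))
    · subst h; exact le_max_left _ _
  · apply max_le
    · exact Finset.le_sup' (fun k => |x k|) (Finset.mem_range.mpr (by omega : n + 1 < n + 1 + 1))
    · exact Finset.sup'_le _ _ fun k hk => Finset.le_sup' (fun k => |x k|)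
        (Finset.mem_range.mpr (by have := Finset.mem_range.mp hk; omega))

private lemma abs_le_sx (x : ℕ → ℝ) (n : ℕ) : |x n| ≤ sx x n :=
  (abs_le_Mx x le_rfl).trans (le_max_left _ _)

private lemma weight_bound (x : ℕ → ℝ) (k : ℕ) : |2 * x k / sx x k| ≤ 2 := by
  rcases eq_or_lt_of_le (sx_nonneg x k) with h | h
  · rw [← h, div_zero, abs_zero]; norm_num
  · rw [abs_div, abs_of_pos h, div_le_iff₀ h, abs_mul]
    have := abs_le_sx x k
    rw [abs_two]
    nlinarith [abs_nonneg (x k)]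

private lemma claimA (s t v : ℝ) (h1 : -s ≤ v) (h2 : v ≤ s) (h3 : s ≤ t) :
    (s - v) * (2*t - v - s) * (t + s) ≤ 6 * s * (t - v)^2 := by
  nlinarith [mul_nonneg (sub_nonneg.2 h2) (by linarith : (0:ℝ) ≤ v + s), sq_nonneg (t - v),
    sq_nonneg (t - s), sq_nonneg (v - s), sq_nonneg (v + s),
    mul_nonneg (by linarith : (0:ℝ) ≤ s - v) (by linarith : (0:ℝ) ≤ t - s),
    sq_nonneg (t + s - 2*v)]

private lemma caseU (a b s t v : ℝ) (ha : 0 ≤ a) (has : a ≤ s) (hab : a ≤ b)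
    (hbt : b ≤ t) (hst : s ≤ t) (hv1 : -s ≤ v) (hv2 : v ≤ s)
    (hb2 : b^2 = a^2 + (t - v)^2) :
    b^2 - a^2 - (t - s)^2 ≤ 6 * s * (b - a) := by
  have hs0 : 0 ≤ s := ha.trans has
  have ht0 : 0 ≤ t := hs0.trans hst
  rcases eq_or_lt_of_le (add_nonneg hs0 ht0) with h0 | h0
  · have hs : s = 0 := by linarith
    have ht : t = 0 := by linarith
    have hv : v = 0 := by rw [hs] at hv1 hv2; linarith
    rw [hs, ht, hv] at *
    nlinarith [hb2]
  · have hA := claimA s t v hv1 hv2 hst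
    have hP : (0:ℝ) ≤ (s - v) * (2*t - v - s) :=
      mul_nonneg (by linarith) (by linarith)
    have hBA : (0:ℝ) ≤ b - a := by linarith
    have key : ((s - v) * (2*t - v - s)) * (t + s) ≤ (6 * s * (b - a)) * (t + s) := by
      nlinarith [mul_nonneg (mul_nonneg (by positivity : (0:ℝ) ≤ 6 * s) hBA)
        (by linarith : (0:ℝ) ≤ t + s - (a + b))]
    have hle : (s - v) * (2*t - v - s) ≤ 6 * s * (b - a) :=
      le_of_mul_le_mul_right key (by linarith)
    nlinarith [hle]

private lemma claimB (a b s u v : ℝ) (ha : 0 ≤ a) (has : a ≤ s) (hab : a ≤ b) (hs0 : 0 < s)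
    (hsb : s < b) (hv1 : -s ≤ v) (hv2 : v ≤ s) (hu1 : -b ≤ u) (hu2 : u ≤ b)
    (hd : 0 ≤ u - v) (hb2 : b^2 = a^2 + (u - v)^2) :
    b*(b^2 - a^2) + s*b*(b-s) - u^2*(b-s) ≤ 6*s*b*(b-a) := by
  rcases le_or_gt (2*b) (5*s) with h | h
  · nlinarith [mul_nonneg (mul_nonneg (by linarith : (0:ℝ) ≤ b) (by linarith : (0:ℝ) ≤ b - a)) (by linarith : (0:ℝ) ≤ 5*s - a - b),
      mul_nonneg (sq_nonneg u) (by linarith : (0:ℝ) ≤ b - s),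
      mul_nonneg (mul_nonneg hs0.le (by linarith : (0:ℝ) ≤ b)) (by linarith : (0:ℝ) ≤ s - a)]
  · rcases le_or_gt (u - v) s with h2 | h2
    · nlinarith [mul_nonneg (sq_nonneg u) (by linarith : (0:ℝ) ≤ b - s),
        mul_nonneg (mul_nonneg hs0.le (by linarith : (0:ℝ) ≤ b)) (by linarith : (0:ℝ) ≤ 5*b - 6*a),
        mul_nonneg (by linarith : (0:ℝ) ≤ b) (mul_nonneg (by linarith : (0:ℝ) ≤ s - (u-v)) (by linarith : (0:ℝ) ≤ s + (u-v)))]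
    · have hdb : u - v ≤ b := by nlinarith [sq_nonneg a, sq_nonneg (u - v)]
      nlinarith [mul_nonneg (by linarith : (0:ℝ) ≤ b - s) (mul_nonneg (by linarith : (0:ℝ) ≤ u - (u - v - s)) (by linarith : (0:ℝ) ≤ u + (u - v - s))),
        mul_nonneg hs0.le (mul_nonneg (by linarith : (0:ℝ) ≤ b - (u - v)) (by linarith : (0:ℝ) ≤ (u - v) + 3*b - 2*s)),
        mul_nonneg (mul_nonneg hs0.le (by linarith : (0:ℝ) ≤ b)) (by linarith : (0:ℝ) ≤ s - a),
        mul_nonneg (mul_nonneg hs0.le (by linarith : (0:ℝ) ≤ b)) (by linarith : (0:ℝ) ≤ 2*b - 5*s),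
        mul_nonneg (mul_nonneg hs0.le hs0.le) (by linarith : (0:ℝ) ≤ b - s)]

private lemma step_ineq (a b s t u v : ℝ) (ha : 0 ≤ a) (has : a ≤ s) (hab : a ≤ b)
    (hbt : b ≤ t) (hst : s ≤ t) (hv : |v| ≤ s) (hu : |u| ≤ t)
    (hb2 : b^2 = a^2 + (u - v)^2) (htm : t ≤ max s (max |u| b)) :
    u^2 / t + t - 6*b ≤ v^2 / s + s - 6*a + 2 * v / s * (u - v) := by
  have hv1 : -s ≤ v := neg_le_of_abs_le hv
  have hv2 : v ≤ s := le_of_abs_le hv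
  have hu1 : -t ≤ u := neg_le_of_abs_le hu
  have hu2 : u ≤ t := le_of_abs_le hu
  rcases eq_or_lt_of_le (ha.trans has) with hs0 | hs0
  · -- s = 0
    have hs : s = 0 := hs0.symm
    have hvz : v = 0 := by rw [hs] at hv1 hv2; linarith
    have haz : a = 0 := by linarith
    have hbu : b = |u| := by
      have : b^2 = |u|^2 := by rw [sq_abs]; rw [hb2, haz, hvz]; ring
      have hb0 : 0 ≤ b := by linarith
      nlinarith [abs_nonneg u]
    have htu : t = |u| := by
      have : t ≤ |u| := by
        rcases le_max_iff.mp htm with h | h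
        · rw [hs] at h
          linarith [abs_nonneg u]
        · rcases le_max_iff.mp h with h' | h'
          · exact h'
          · linarith [hbu ▸ h']
      linarith [hu]
    rw [hs, hvz, haz, htu, hbu]
    rcases eq_or_ne u 0 with hu0 | hu0
    · simp [hu0]
    · have habs : |u| ≠ 0 := abs_ne_zero.mpr hu0
      have : u^2 / |u| = |u| := by
        rw [← sq_abs, sq, mul_div_assoc, div_self habs, mul_one]
      rw [this]
      simp only [zero_pow, ne_eq, OfNat.ofNat_ne_zero, not_false_eq_true, div_zero]
      nlinarith [abs_nonneg u]
  · -- 0 < s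
    have ht0 : 0 < t := lt_of_lt_of_le hs0 hst
    have key : t*(b^2 - a^2) + s*t*(t-s) - u^2*(t-s) ≤ 6*s*t*(b-a) := by
      rcases le_or_gt t s with hts | hts
      · have : t = s := le_antisymm hts hst
        subst this
        nlinarith [mul_nonneg (mul_nonneg hs0.le (by linarith : (0:ℝ) ≤ b - a))
          (by linarith : (0:ℝ) ≤ 2*t - a - b), mul_nonneg (mul_nonneg hs0.le hs0.le)
          (by linarith : (0:ℝ) ≤ b - a)]
      · have htm' : t ≤ max |u| b := by
          rcases le_max_iff.mp htm with h | h
          · linarith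
          · exact h
        rcases le_max_iff.mp htm' with h | h
        · -- t = |u|
          have htu : t = |u| := le_antisymm h hu
          have hut : u^2 = t^2 := by rw [htu, sq_abs]
          have hred : b^2 - a^2 - (t - s)^2 ≤ 6 * s * (b - a) := by
            rcases le_or_gt 0 u with hup | hup
            · have : t = u := by rw [htu, abs_of_nonneg hup]
              exact caseU a b s t v ha has hab hbt hst hv1 hv2 (by rw [this]; exact hb2)
            · have : t = -u := by rw [htu, abs_of_neg hup]
              refine caseU a b s t (-v) ha has hab hbt hst (by linarith) (by linarith) ?_
              rw [this, hb2]; ring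
          nlinarith [mul_le_mul_of_nonneg_left hred ht0.le, hut]
        · -- t = b
          have htb : t = b := le_antisymm h hbt
          subst htb
          rcases le_or_gt 0 (u - v) with hd | hd
          · nlinarith [claimB a t s u v ha has hab hs0 hts hv1 hv2 hu1 hu2 hd hb2]
          · have := claimB a t s (-u) (-v) ha has hab hs0 hts (by linarith) (by linarith)
              (by linarith) (by linarith) (by linarith) (by rw [hb2]; ring)
            nlinarith [this]
    rw [← sub_nonneg]
    have hid : (v^2 / s + s - 6*a + 2 * v / s * (u - v)) - (u^2 / t + t - 6*b)
        = (6*s*t*(b-a) - (t*(b^2 - a^2) + s*t*(t-s) - u^2*(t-s))) / (s*t) := by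
      field_simp
      linear_combination t * hb2
    rw [hid]
    apply div_nonneg (by linarith) (by positivity)

private lemma main_inv (x : ℕ → ℝ) : ∀ N : ℕ,
    (x N)^2 / sx x N + sx x N - 6 * Real.sqrt (Qv x N) ≤
      ∑ k ∈ Finset.range N, (2 * x k / sx x k) * (x (k+1) - x k) := by
  intro N
  induction N with
  | zero =>
    have hM : Mx x 0 = |x 0| := by unfold Mx; simp
    have hQ : Qv x 0 = (x 0)^2 := by unfold Qv; simp
    have hs : sx x 0 = |x 0| := by
      unfold sx; rw [hM, hQ, Real.sqrt_sq_eq_abs, max_self]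
    rw [hs, hQ, Real.sqrt_sq_eq_abs]
    simp only [Finset.range_zero, Finset.sum_empty]
    rcases eq_or_ne (x 0) 0 with h | h
    · simp [h]
    · have : (x 0)^2 / |x 0| = |x 0| := by
        rw [← sq_abs, sq, mul_div_assoc, div_self (abs_ne_zero.mpr h), mul_one]
      rw [this]
      nlinarith [abs_nonneg (x 0)]
  | succ N ih =>
    rw [Finset.sum_range_succ]
    have hQs := Qv_succ x N
    have ha : 0 ≤ Real.sqrt (Qv x N) := Real.sqrt_nonneg _
    have hab : Real.sqrt (Qv x N) ≤ Real.sqrt (Qv x (N+1)) :=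
      Real.sqrt_le_sqrt (by nlinarith [sq_nonneg (x (N+1) - x N)])
    have has : Real.sqrt (Qv x N) ≤ sx x N := le_max_right _ _
    have hbt : Real.sqrt (Qv x (N+1)) ≤ sx x (N+1) := le_max_right _ _
    have hst : sx x N ≤ sx x (N+1) := by
      unfold sx
      apply max_le_max _ hab
      rw [Mx_succ]; exact le_max_right _ _
    have hv : |x N| ≤ sx x N := abs_le_sx x N
    have hu : |x (N+1)| ≤ sx x (N+1) := abs_le_sx x (N+1)
    have hb2 : (Real.sqrt (Qv x (N+1)))^2 = (Real.sqrt (Qv x N))^2 + (x (N+1) - x N)^2 := by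
      rw [Real.sq_sqrt (Qv_nonneg x (N+1)), Real.sq_sqrt (Qv_nonneg x N), hQs]
    have htm : sx x (N+1) ≤ max (sx x N) (max (|x (N+1)|) (Real.sqrt (Qv x (N+1)))) := by
      unfold sx
      apply max_le
      · rw [Mx_succ]
        apply max_le
        · exact le_max_of_le_right (le_max_left _ _)
        · exact le_max_of_le_left (le_max_left _ _)
      · exact le_max_of_le_right (le_max_right _ _)
    have hstep := step_ineq (Real.sqrt (Qv x N)) (Real.sqrt (Qv x (N+1))) (sx x N)
      (sx x (N+1)) (x (N+1)) (x N) ha has hab hbt hst hv hu hb2 htm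
    linarith

private lemma sx_congr {x y : ℕ → ℝ} {k : ℕ} (h : ∀ i ≤ k, x i = y i) : sx x k = sx y k := by
  unfold sx Mx Qv
  have hM : (∀ i ∈ Finset.range (k+1), |x i| = |y i|) := fun i hi => by
    rw [h i (Nat.lt_succ_iff.mp (Finset.mem_range.mp hi))]
  rw [Finset.sup'_congr ⟨0, by simp⟩ rfl hM, h 0 (Nat.zero_le k)]
  have hS : ∑ i ∈ Finset.range k, (x (i+1) - x i)^2
      = ∑ i ∈ Finset.range k, (y (i+1) - y i)^2 := by
    apply Finset.sum_congr rfl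
    intro i hi
    have hik : i < k := Finset.mem_range.mp hi
    rw [h i hik.le, h (i+1) hik]
  rw [hS]

private noncomputable def trunc (k : ℕ) (v : Fin (k+1) → ℝ) : ℕ → ℝ :=
  fun n => v ⟨min n k, Nat.lt_succ_of_le (min_le_right n k)⟩

/-- Pathwise Burkholder–Davis–Gundy inequality of Beiglböck and Siorpaes for `p = 1`:
there exist predictable weights `f_k` bounded by `2` such that the running maximum of any
real sequence is dominated by `6` times the square root of the discrete quadratic variation
plus the discrete integral of `f` against the sequence. -/
theorem pathwise_BDG_upper :
    ∃ f : (k : ℕ) → (Fin (k + 1) → ℝ) → ℝ,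
      (∀ (k : ℕ) (v : Fin (k + 1) → ℝ), |f k v| ≤ 2) ∧
      ∀ (x : ℕ → ℝ) (N : ℕ),
        (Finset.range (N + 1)).sup' ⟨0, by simp⟩ (fun k => |x k|) ≤
          6 * Real.sqrt ((x 0) ^ 2 + ∑ k ∈ Finset.range N, (x (k + 1) - x k) ^ 2) +
            ∑ k ∈ Finset.range N, f k (fun i => x i) * (x (k + 1) - x k) := by
  refine ⟨fun k v => 2 * trunc k v k / sx (trunc k v) k,
    fun k v => weight_bound (trunc k v) k, ?_⟩
  intro x N
  have happ : ∀ k : ℕ, 2 * trunc k (fun i => x i) k / sx (trunc k (fun i => x i)) k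
      = 2 * x k / sx x k := by
    intro k
    have h1 : ∀ i ≤ k, trunc k (fun i => x i) i = x i := by
      intro i hik
      show x (min i k) = x i
      rw [min_eq_left hik]
    rw [h1 k le_rfl, sx_congr h1]
  have hsum : ∑ k ∈ Finset.range N,
      (2 * trunc k (fun i : Fin (k+1) => x i) k / sx (trunc k (fun i : Fin (k+1) => x i)) k)
        * (x (k + 1) - x k)
      = ∑ k ∈ Finset.range N, (2 * x k / sx x k) * (x (k + 1) - x k) :=
    Finset.sum_congr rfl fun k _ => by rw [happ k]
  show Mx x N ≤ 6 * Real.sqrt (Qv x N) + _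
  rw [hsum]
  have h1 := main_inv x N
  have h2 : 0 ≤ (x N)^2 / sx x N := div_nonneg (sq_nonneg _) (sx_nonneg x N)
  have h3 : Mx x N ≤ sx x N := le_max_left _ _
  linarith
end

section
/- The outer expectation $\overline{\mathbb{E}}$ defined in the paper is countably subadditive: for any sequence of nonnegative processes $Z^k : [0,T] \times \Omega \to [0,+\infty]$, $\overline{\mathbb{E}}\left(\sum_{k=1}^\infty Z^k\right) \le \sum_{k=1}^\infty \overline{\mathbb{E}} Z^k$. -/
open Set Filter
open scoped ENNReal

noncomputable section

/-- The space of continuous `d`-dimensional price paths. -/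
def PricePath (d : ℕ) : Type := {ω : ℝ → (Fin d → ℝ) // Continuous ω}

/-- Two paths agree up to (extended) time `u`. -/
def AgreeUpTo {d : ℕ} (ω ω' : PricePath d) (u : ℝ≥0∞) : Prop :=
  ∀ s : ℝ, 0 ≤ s → ENNReal.ofReal s ≤ u → ω.1 s = ω'.1 s

/-- A stopping time with respect to the natural filtration of the coordinate process,
characterized Galmarino-style: the value of `τ` is determined by the path up to time `τ`. -/
def IsStoppingTimeE {d : ℕ} (τ : PricePath d → ℝ≥0∞) : Prop :=
  ∀ ω ω' : PricePath d, AgreeUpTo ω ω' (τ ω) → τ ω = τ ω'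

/-- `g` is `𝓕_τ`-measurable: its value is determined by the path up to time `τ`. -/
def MeasurableAtTime {d : ℕ} (τ : PricePath d → ℝ≥0∞) (g : PricePath d → Fin d → ℝ) : Prop :=
  ∀ ω ω' : PricePath d, AgreeUpTo ω ω' (τ ω) → g ω = g ω'

/-- A simple trading strategy: a nondecreasing sequence of stopping times, eventually
constant on every path, together with bounded `𝓕_{τ_l}`-measurable positions `g_l`. -/
structure SimpleStrategy (d : ℕ) (T : ℝ) where
  τ : ℕ → PricePath d → ℝ≥0∞
  g : ℕ → PricePath d → Fin d → ℝ
  stopping : ∀ l, IsStoppingTimeE (τ l)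
  zero : ∀ ω, τ 0 ω = 0
  mono : ∀ l ω, τ l ω ≤ τ (l + 1) ω
  eventuallyConst : ∀ ω, ∃ L, ∀ l, L ≤ l → τ l ω = τ L ω
  adapted : ∀ l, MeasurableAtTime (τ l) (g l)
  bdd : ∀ l, ∃ C : ℝ, ∀ ω i, |g l ω i| ≤ C

/-- The value of the path at the stopped time `u ⊓ t`. -/
def stopVal {d : ℕ} (ω : PricePath d) (u : ℝ≥0∞) (t : ℝ) : Fin d → ℝ :=
  ω.1 (if u = ∞ then t else min u.toReal t)

/-- The integral process `(G ⬝ S)_t(ω)` of a simple strategy. -/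
def integ {d : ℕ} {T : ℝ} (G : SimpleStrategy d T) (t : ℝ) (ω : PricePath d) : ℝ :=
  ∑' l : ℕ, ∑ i, G.g l ω i * (stopVal ω (G.τ (l + 1) ω) t i - stopVal ω (G.τ l ω) t i)

/-- `λ`-admissibility: the wealth `(G ⬝ S)_t` never drops below `-λ`. -/
def Admissible {d : ℕ} {T : ℝ} (lam : ℝ) (G : SimpleStrategy d T) : Prop :=
  ∀ (ω : PricePath d) (t : ℝ), t ∈ Icc (0:ℝ) T → -lam ≤ integ G t ω

/-- A set is Vovk-null if its indicator can be superhedged at arbitrarily small cost. -/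
def VovkNull {d : ℕ} (T : ℝ) (A : Set (PricePath d)) : Prop :=
  ∀ ε : ℝ, 0 < ε → ∃ H : ℕ → SimpleStrategy d T, (∀ n, Admissible ε (H n)) ∧
    ∀ ω ∈ A, (1 : EReal) ≤
      Filter.liminf (fun n => ((ε + integ (H n) T ω : ℝ) : EReal)) Filter.atTop

/-- A `[0,T]`-valued stopping time. -/
def IsStoppingTime01 {d : ℕ} (T : ℝ) (τ : PricePath d → ℝ) : Prop :=
  (∀ ω, τ ω ∈ Icc (0:ℝ) T) ∧
  ∀ ω ω' : PricePath d, AgreeUpTo ω ω' (ENNReal.ofReal (τ ω)) → τ ω = τ ω'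

/-- The outer expectation of the paper: the minimal superhedging cost of `Z_τ`
simultaneously for all `[0,T]`-valued stopping times `τ`, for all paths outside some
null set. -/
def outerExp (d : ℕ) (T : ℝ) (Z : ℝ → PricePath d → ℝ≥0∞) : ℝ≥0∞ :=
  sInf {l : ℝ≥0∞ | ∃ lam : ℝ, 0 < lam ∧ l = ENNReal.ofReal lam ∧
    ∃ Ω' : Set (PricePath d), VovkNull T Ω'ᶜ ∧
    ∃ H : ℕ → SimpleStrategy d T, (∀ n, Admissible lam (H n)) ∧
      ∀ ω ∈ Ω', ∀ τ : PricePath d → ℝ, IsStoppingTime01 T τ →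
        ((Z (τ ω) ω : ℝ≥0∞) : EReal) ≤
          Filter.liminf (fun n => ((lam + integ (H n) (τ ω) ω : ℝ) : EReal)) Filter.atTop}

/-!
Given superhedges `(λₖ, Hᵏ)` of the processes `Zᵏ`, the diagonal strategies
`n ↦ H^{0,n} + ⋯ + H^{n,n}` superhedge `∑ₖ Zᵏ` at cost `∑ₖ λₖ`: every summand has wealth at
least `-λₖ`, so discarding the summands with `k ≥ K` only lowers the wealth, and `liminf` is
superadditive. The exceptional null sets are absorbed because the same construction, with costs
`εₖ` summing to at most `ε`, shows that Vovk-null sets are closed under countable unions.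

The sum of two simple strategies trades along the merged sequence of stopping times
`ρₗ = maxᵢ≤ₗ min (τᵢ, σₗ₋ᵢ)`, after each strategy has been modified to put its stopping times
at `∞` once it has stopped trading (otherwise the merged times would stop at the earlier of
the two final times).
-/

open scoped Matrix

section

variable {d : ℕ} {T : ℝ}

namespace AgreeUpTo

variable {ω ω' : PricePath d} {u v : ℝ≥0∞}

theorem mono (h : AgreeUpTo ω ω' v) (huv : u ≤ v) : AgreeUpTo ω ω' u :=
  fun s hs hsu => h s hs (hsu.trans huv)

theorem symm (h : AgreeUpTo ω ω' u) : AgreeUpTo ω' ω u :=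
  fun s hs hsu => (h s hs hsu).symm

end AgreeUpTo

/-- `IsStoppingTimeE κ` and `MeasurableAtTime κ g` unfold to `DeterminedUpTo κ κ` and
`DeterminedUpTo κ g`. -/
def DeterminedUpTo {α : Type*} (κ : PricePath d → ℝ≥0∞) (f : PricePath d → α) : Prop :=
  ∀ ω ω' : PricePath d, AgreeUpTo ω ω' (κ ω) → f ω = f ω'

namespace DeterminedUpTo

variable {α : Type*} {κ κ' : PricePath d → ℝ≥0∞} {f g : PricePath d → α}

theorem mono (hf : DeterminedUpTo κ f) (hκ : ∀ ω, κ ω ≤ κ' ω) : DeterminedUpTo κ' f :=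
  fun ω ω' h => hf ω ω' (h.mono (hκ ω))

theorem const (a : α) : DeterminedUpTo κ fun _ => a :=
  fun _ _ _ => rfl

theorem ite {P : PricePath d → Prop} [DecidablePred P] (hP : DeterminedUpTo κ P)
    (hf : DeterminedUpTo κ f) (hg : DeterminedUpTo κ g) :
    DeterminedUpTo κ fun ω => if P ω then f ω else g ω := by
  intro ω ω' h
  simp only [hP ω ω' h, hf ω ω' h, hg ω ω' h]

end DeterminedUpTo

namespace IsStoppingTimeE

variable {κ κ₁ κ₂ ρ : PricePath d → ℝ≥0∞} {ω ω' : PricePath d} {u : ℝ≥0∞}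

theorem eq_of_agree (hκ : IsStoppingTimeE κ) (h : AgreeUpTo ω ω' u) (hle : κ ω ≤ u) :
    κ ω = κ ω' :=
  hκ ω ω' (h.mono hle)

theorem eq_of_agree' (hκ : IsStoppingTimeE κ) (h : AgreeUpTo ω ω' u) (hle : κ ω' ≤ u) :
    κ ω = κ ω' :=
  (hκ.eq_of_agree h.symm hle).symm

theorem inf (h₁ : IsStoppingTimeE κ₁) (h₂ : IsStoppingTimeE κ₂) :
    IsStoppingTimeE fun ω => κ₁ ω ⊓ κ₂ ω := by
  intro ω ω' h
  dsimp only at h ⊢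
  have le_of_le : ∀ {κ : PricePath d → ℝ≥0∞}, IsStoppingTimeE κ →
      κ₁ ω ⊓ κ₂ ω ≤ κ ω → κ₁ ω ⊓ κ₂ ω ≤ κ ω' := by
    intro κ hκ hle
    rcases le_total (κ ω') (κ₁ ω ⊓ κ₂ ω) with h' | h'
    · rwa [← hκ.eq_of_agree' h h']
    · exact h'
  refine le_antisymm (le_inf (le_of_le h₁ inf_le_left) (le_of_le h₂ inf_le_right)) ?_
  rcases le_total (κ₁ ω) (κ₂ ω) with hle | hle
  · rw [inf_eq_left.2 hle] at h ⊢
    exact h₁.eq_of_agree h le_rfl ▸ inf_le_left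
  · rw [inf_eq_right.2 hle] at h ⊢
    exact h₂.eq_of_agree h le_rfl ▸ inf_le_right

theorem finset_sup {ι : Type*} {s : Finset ι} {κ : ι → PricePath d → ℝ≥0∞}
    (hκ : ∀ i ∈ s, IsStoppingTimeE (κ i)) : IsStoppingTimeE fun ω => s.sup fun i => κ i ω :=
  fun ω _ h => Finset.sup_congr rfl fun i hi =>
    (hκ i hi).eq_of_agree h (Finset.le_sup (f := fun i => κ i ω) hi)

theorem determinedUpTo_le (hκ : IsStoppingTimeE κ) (hρ : IsStoppingTimeE ρ) :
    DeterminedUpTo ρ fun ω => κ ω ≤ ρ ω := by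
  intro ω ω' h
  have hρω : ρ ω = ρ ω' := hρ ω ω' h
  dsimp only
  refine propext ⟨fun hle => ?_, fun hle => ?_⟩
  · rwa [← hκ.eq_of_agree h hle, ← hρω]
  · rwa [hκ.eq_of_agree' h (hle.trans hρω.symm.le), hρω]

end IsStoppingTimeE

theorem sum_range_sub_eq_of_refines {α β : Type*} [Lattice α] [AddCommGroup β]
    (F : ℕ → α → β) {τ ρ : ℕ → α} (a : ℕ → ℕ) {M : ℕ} (hτ : Monotone τ) (hρ : Monotone ρ)
    (h0 : ρ 0 ≤ τ 0) (hM : τ M ≤ ρ M)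
    (ha : ∀ l < M, a l < M ∧ τ (a l) ≤ ρ l ∧ ρ (l + 1) ≤ τ (a l + 1)) :
    ∑ l ∈ Finset.range M, (F (a l) (ρ (l + 1)) - F (a l) (ρ l)) =
      ∑ p ∈ Finset.range M, (F p (τ (p + 1)) - F p (τ p)) := by
  -- Clip the fine partition `ρ` to each coarse interval `[τ p, τ (p + 1)]`, then telescope.
  set clip : ℕ → α → α := fun p x => (x ⊓ τ (p + 1)) ⊔ τ p
  have clip_of_le : ∀ p x, x ≤ τ p → clip p x = τ p := fun p x hx =>
    sup_eq_right.2 (inf_le_left.trans hx)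
  have clip_of_ge : ∀ p x, τ (p + 1) ≤ x → clip p x = τ (p + 1) := fun p x hx => by
    simp only [clip, inf_eq_right.2 hx, sup_eq_left.2 (hτ p.le_succ)]
  have clip_of_mem : ∀ p x, τ p ≤ x → x ≤ τ (p + 1) → clip p x = x := fun p x h₁ h₂ => by
    simp only [clip, inf_eq_left.2 h₂, sup_eq_left.2 h₁]
  have hrow : ∀ l < M, F (a l) (ρ (l + 1)) - F (a l) (ρ l) =
      ∑ p ∈ Finset.range M, (F p (clip p (ρ (l + 1))) - F p (clip p (ρ l))) := by
    intro l hl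
    obtain ⟨haM, hlo, hhi⟩ := ha l hl
    rw [Finset.sum_eq_single_of_mem (a l) (Finset.mem_range.2 haM)]
    · rw [clip_of_mem _ _ (hlo.trans (hρ l.le_succ)) hhi,
        clip_of_mem _ _ hlo ((hρ l.le_succ).trans hhi)]
    · intro p _ hp
      rcases lt_or_gt_of_ne hp with hp | hp
      · have hle : τ (p + 1) ≤ ρ l := (hτ hp).trans hlo
        rw [clip_of_ge _ _ hle, clip_of_ge _ _ (hle.trans (hρ l.le_succ)), sub_self]
      · have hle : ρ (l + 1) ≤ τ p := hhi.trans (hτ hp)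
        rw [clip_of_le _ _ hle, clip_of_le _ _ ((hρ l.le_succ).trans hle), sub_self]
  rw [Finset.sum_congr rfl fun l hl => hrow l (Finset.mem_range.1 hl), Finset.sum_comm]
  refine Finset.sum_congr rfl fun p hp => ?_
  rw [Finset.sum_range_sub (fun l => F p (clip p (ρ l))),
    clip_of_ge _ _ ((hτ (Finset.mem_range.1 hp)).trans hM),
    clip_of_le _ _ (h0.trans (hτ p.zero_le))]

namespace SimpleStrategy

variable (G G₁ G₂ : SimpleStrategy d T)

theorem monotone_τ (ω : PricePath d) : Monotone fun l => G.τ l ω :=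
  monotone_nat_of_le_succ fun l => G.mono l ω

theorem τ_le_of_stable {ω : PricePath d} {L : ℕ} (hL : ∀ l, L ≤ l → G.τ l ω = G.τ L ω)
    (j : ℕ) : G.τ j ω ≤ G.τ L ω := by
  rcases le_total j L with h | h
  · exact G.monotone_τ ω h
  · exact (hL j h).le

theorem integ_eq_tsum (t : ℝ) (ω : PricePath d) :
    integ G t ω = ∑' l, (G.g l ω ⬝ᵥ stopVal ω (G.τ (l + 1) ω) t -
      G.g l ω ⬝ᵥ stopVal ω (G.τ l ω) t) :=
  tsum_congr fun l => dotProduct_sub (G.g l ω) _ _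

theorem integ_eq_sum_range {ω : PricePath d} {M : ℕ}
    (hM : ∀ l, M ≤ l → G.τ l ω = G.τ M ω) (t : ℝ) :
    integ G t ω = ∑ l ∈ Finset.range M, (G.g l ω ⬝ᵥ stopVal ω (G.τ (l + 1) ω) t -
      G.g l ω ⬝ᵥ stopVal ω (G.τ l ω) t) := by
  rw [integ_eq_tsum]
  refine tsum_eq_sum fun l hl => ?_
  rw [Finset.mem_range, not_lt] at hl
  rw [hM (l + 1) (by omega), hM l hl, sub_self]

open Classical in
def stabIndex (ω : PricePath d) : ℕ :=
  Nat.find (G.eventuallyConst ω)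

open Classical in
theorem stabIndex_le_iff {ω : PricePath d} {l : ℕ} :
    G.stabIndex ω ≤ l ↔ ∀ m, l ≤ m → G.τ m ω = G.τ l ω := by
  constructor
  · intro hl m hm
    have hspec := Nat.find_spec (G.eventuallyConst ω)
    rw [hspec m (hl.trans hm), hspec l hl]
  · exact fun h => Nat.find_min' _ h

theorem determinedUpTo_stabIndex_le (l : ℕ) :
    DeterminedUpTo (G.τ l) fun ω => G.stabIndex ω ≤ l := by
  intro ω ω' h
  have hl : G.τ l ω = G.τ l ω' := G.stopping l ω ω' h
  simp only [stabIndex_le_iff]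
  refine propext (forall₂_congr fun m _ => ⟨fun hm => ?_, fun hm => ?_⟩)
  · rw [← (G.stopping m).eq_of_agree h hm.le, hm, hl]
  · rw [(G.stopping m).eq_of_agree' h (hm.trans hl.symm).le, hm, hl]

theorem determinedUpTo_stabIndex_lt (l : ℕ) :
    DeterminedUpTo (G.τ l) fun ω => G.stabIndex ω < l := by
  cases l with
  | zero => simpa using DeterminedUpTo.const False
  | succ m =>
    simpa only [Nat.lt_succ_iff] using
      (G.determinedUpTo_stabIndex_le m).mono fun ω => G.mono m ω

def normalize : SimpleStrategy d T where
  τ l ω := if G.stabIndex ω < l then ⊤ else G.τ l ω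
  g l ω := if G.stabIndex ω ≤ l then 0 else G.g l ω
  stopping l :=
    ((G.determinedUpTo_stabIndex_lt l).ite (.const ⊤) (G.stopping l)).mono
      fun ω => by split_ifs <;> simp
  zero ω := by simp [G.zero]
  mono l ω := by
    split_ifs <;> first | exact le_top | omega | exact G.mono l ω
  eventuallyConst ω := ⟨G.stabIndex ω + 1, fun l hl => by simp [show G.stabIndex ω < l by omega]⟩
  adapted l :=
    ((G.determinedUpTo_stabIndex_le l).ite (.const 0) (G.adapted l)).mono
      fun ω => by split_ifs <;> simp
  bdd l := by
    obtain ⟨C, hC⟩ := G.bdd l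
    refine ⟨max C 0, fun ω i => ?_⟩
    split_ifs
    · simp
    · exact (hC ω i).trans (le_max_left _ _)

theorem normalize_τ_of_lt {ω : PricePath d} {l : ℕ} (hl : G.stabIndex ω < l) :
    G.normalize.τ l ω = ⊤ :=
  if_pos hl

theorem integ_normalize (t : ℝ) (ω : PricePath d) : integ G.normalize t ω = integ G t ω := by
  rw [integ_eq_tsum, integ_eq_tsum]
  refine tsum_congr fun l => ?_
  simp only [normalize]
  by_cases hl : G.stabIndex ω ≤ l
  · rw [if_pos hl, (G.stabIndex_le_iff.1 hl) (l + 1) l.le_succ]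
    simp
  · rw [if_neg hl, if_neg (by omega), if_neg (by omega)]

theorem exists_bound_of_le (l : ℕ) :
    ∃ C : ℝ, ∀ p ≤ l, ∀ ω i, |G.g p ω i| ≤ C := by
  induction l with
  | zero =>
    obtain ⟨C, hC⟩ := G.bdd 0
    exact ⟨C, fun p hp => by rw [Nat.le_zero.1 hp]; exact hC⟩
  | succ l ih =>
    obtain ⟨C, hC⟩ := ih
    obtain ⟨C', hC'⟩ := G.bdd (l + 1)
    refine ⟨max C C', fun p hp ω i => ?_⟩
    rcases Nat.of_le_succ hp with hp | rfl
    · exact (hC p hp ω i).trans (le_max_left _ _)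
    · exact (hC' ω i).trans (le_max_right _ _)

/-- The `l`-th element of the sorted merge of the stopping times of `G₁` and `G₂`. -/
def mergeTime (l : ℕ) (ω : PricePath d) : ℝ≥0∞ :=
  (Finset.range (l + 1)).sup fun i => G₁.τ i ω ⊓ G₂.τ (l - i) ω

theorem le_mergeTime {i l : ℕ} (hi : i ≤ l) (ω : PricePath d) :
    G₁.τ i ω ⊓ G₂.τ (l - i) ω ≤ mergeTime G₁ G₂ l ω :=
  Finset.le_sup (f := fun i => G₁.τ i ω ⊓ G₂.τ (l - i) ω) (Finset.mem_range.2 (by omega))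

theorem mergeTime_le_comm (l : ℕ) (ω : PricePath d) :
    mergeTime G₁ G₂ l ω ≤ mergeTime G₂ G₁ l ω :=
  Finset.sup_le fun i hi => by
    have := le_mergeTime G₂ G₁ (Nat.sub_le l i) ω
    rwa [Nat.sub_sub_self (Finset.mem_range_succ_iff.1 hi), inf_comm] at this

theorem mergeTime_comm : mergeTime G₁ G₂ = mergeTime G₂ G₁ :=
  funext₂ fun l ω => (mergeTime_le_comm G₁ G₂ l ω).antisymm (mergeTime_le_comm G₂ G₁ l ω)

theorem mergeTime_le_left (l : ℕ) (ω : PricePath d) : mergeTime G₁ G₂ l ω ≤ G₁.τ l ω :=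
  Finset.sup_le fun _ hi =>
    inf_le_left.trans (G₁.monotone_τ ω (Finset.mem_range_succ_iff.1 hi))

theorem mergeTime_zero (ω : PricePath d) : mergeTime G₁ G₂ 0 ω = 0 := by
  simp [mergeTime, G₁.zero]

theorem mergeTime_le_succ (l : ℕ) (ω : PricePath d) :
    mergeTime G₁ G₂ l ω ≤ mergeTime G₁ G₂ (l + 1) ω :=
  Finset.sup_le fun i hi => by
    have hi : i ≤ l := Finset.mem_range_succ_iff.1 hi
    exact (inf_le_inf_left _ (G₂.monotone_τ ω (by omega))).trans (le_mergeTime G₁ G₂ (by omega) ω)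

theorem monotone_mergeTime (ω : PricePath d) : Monotone fun l => mergeTime G₁ G₂ l ω :=
  monotone_nat_of_le_succ fun l => mergeTime_le_succ G₁ G₂ l ω

theorem isStoppingTimeE_mergeTime (l : ℕ) : IsStoppingTimeE (mergeTime G₁ G₂ l) :=
  IsStoppingTimeE.finset_sup fun i _ => (G₁.stopping i).inf (G₂.stopping (l - i))

theorem mergeTime_eq_of_stable {ω : PricePath d} {L₁ L₂ : ℕ}
    (h₁ : ∀ l, L₁ ≤ l → G₁.τ l ω = G₁.τ L₁ ω) (h₂ : ∀ l, L₂ ≤ l → G₂.τ l ω = G₂.τ L₂ ω)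
    {l : ℕ} (hl : L₁ + L₂ ≤ l) : mergeTime G₁ G₂ l ω = G₁.τ L₁ ω ⊓ G₂.τ L₂ ω := by
  refine le_antisymm (Finset.sup_le fun i _ =>
    inf_le_inf (G₁.τ_le_of_stable h₁ i) (G₂.τ_le_of_stable h₂ _)) ?_
  simpa [h₂ (l - L₁) (by omega)] using le_mergeTime G₁ G₂ (i := L₁) (l := l) (by omega) ω

theorem mergeTime_succ_le_of_lt {l i : ℕ} {ω : PricePath d}
    (h : mergeTime G₁ G₂ l ω < G₁.τ i ω) : mergeTime G₁ G₂ (l + 1) ω ≤ G₁.τ i ω := by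
  refine Finset.sup_le fun p hp => ?_
  rcases le_or_gt p i with hpi | hpi
  · exact inf_le_left.trans (G₁.monotone_τ ω hpi)
  · have hp : p ≤ l + 1 := Finset.mem_range_succ_iff.1 hp
    have h₂ : G₂.τ (l - i) ω ≤ mergeTime G₁ G₂ l ω :=
      (inf_le_iff.1 (le_mergeTime G₁ G₂ (by omega : i ≤ l) ω)).resolve_left (not_le.2 h)
    exact inf_le_right.trans (((G₂.monotone_τ ω (by omega)).trans h₂).trans h.le)

open Classical in
/-- The index of the position of `G₁` held during the `l`-th merged trading interval. -/
def activeIndex (l : ℕ) (ω : PricePath d) : ℕ :=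
  Nat.findGreatest (fun i => G₁.τ i ω ≤ mergeTime G₁ G₂ l ω) l

theorem activeIndex_le (l : ℕ) (ω : PricePath d) : activeIndex G₁ G₂ l ω ≤ l :=
  Nat.findGreatest_le l

theorem τ_activeIndex_le (l : ℕ) (ω : PricePath d) :
    G₁.τ (activeIndex G₁ G₂ l ω) ω ≤ mergeTime G₁ G₂ l ω :=
  Nat.findGreatest_spec (P := fun i => G₁.τ i ω ≤ mergeTime G₁ G₂ l ω) (Nat.zero_le l)
    (by simp [G₁.zero])

theorem mergeTime_succ_le_τ_activeIndex_succ (l : ℕ) (ω : PricePath d) :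
    mergeTime G₁ G₂ (l + 1) ω ≤ G₁.τ (activeIndex G₁ G₂ l ω + 1) ω := by
  rcases (activeIndex_le G₁ G₂ l ω).eq_or_lt with h | h
  · rw [h]
    exact mergeTime_le_left G₁ G₂ (l + 1) ω
  · refine mergeTime_succ_le_of_lt G₁ G₂ (not_le.1 ?_)
    exact Nat.findGreatest_is_greatest (Nat.lt_succ_self _) h

theorem determinedUpTo_activeIndex (l : ℕ) :
    DeterminedUpTo (mergeTime G₁ G₂ l) (activeIndex G₁ G₂ l) := by
  intro ω ω' h
  have hP : (fun i => G₁.τ i ω ≤ mergeTime G₁ G₂ l ω) =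
      fun i => G₁.τ i ω' ≤ mergeTime G₁ G₂ l ω' :=
    funext fun i => (G₁.stopping i).determinedUpTo_le (isStoppingTimeE_mergeTime G₁ G₂ l) ω ω' h
  unfold activeIndex
  congr 1

theorem determinedUpTo_g_activeIndex (l : ℕ) :
    DeterminedUpTo (mergeTime G₁ G₂ l) fun ω => G₁.g (activeIndex G₁ G₂ l ω) ω := by
  intro ω ω' h
  dsimp only
  rw [← determinedUpTo_activeIndex G₁ G₂ l ω ω' h]
  exact G₁.adapted _ ω ω' (h.mono (τ_activeIndex_le G₁ G₂ l ω))

def merge : SimpleStrategy d T where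
  τ := mergeTime G₁ G₂
  g l ω := G₁.g (activeIndex G₁ G₂ l ω) ω + G₂.g (activeIndex G₂ G₁ l ω) ω
  stopping := isStoppingTimeE_mergeTime G₁ G₂
  zero := mergeTime_zero G₁ G₂
  mono := mergeTime_le_succ G₁ G₂
  eventuallyConst ω := by
    obtain ⟨L₁, h₁⟩ := G₁.eventuallyConst ω
    obtain ⟨L₂, h₂⟩ := G₂.eventuallyConst ω
    exact ⟨L₁ + L₂, fun l hl => by
      rw [mergeTime_eq_of_stable G₁ G₂ h₁ h₂ hl, mergeTime_eq_of_stable G₁ G₂ h₁ h₂ le_rfl]⟩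
  adapted l ω ω' h := congrArg₂ (· + ·) (determinedUpTo_g_activeIndex G₁ G₂ l ω ω' h)
    (determinedUpTo_g_activeIndex G₂ G₁ l ω ω' (by rwa [mergeTime_comm]))
  bdd l := by
    obtain ⟨C₁, hC₁⟩ := G₁.exists_bound_of_le l
    obtain ⟨C₂, hC₂⟩ := G₂.exists_bound_of_le l
    exact ⟨C₁ + C₂, fun ω i => (abs_add_le _ _).trans (add_le_add
      (hC₁ _ (activeIndex_le G₁ G₂ l ω) ω i) (hC₂ _ (activeIndex_le G₂ G₁ l ω) ω i))⟩

theorem sum_range_sub_activeIndex {β : Type*} [AddCommGroup β] (F : ℕ → ℝ≥0∞ → β)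
    {ω : PricePath d} {M : ℕ} (hM : G₁.τ M ω ≤ mergeTime G₁ G₂ M ω) :
    ∑ l ∈ Finset.range M, (F (activeIndex G₁ G₂ l ω) (mergeTime G₁ G₂ (l + 1) ω) -
        F (activeIndex G₁ G₂ l ω) (mergeTime G₁ G₂ l ω)) =
      ∑ p ∈ Finset.range M, (F p (G₁.τ (p + 1) ω) - F p (G₁.τ p ω)) :=
  sum_range_sub_eq_of_refines F (activeIndex G₁ G₂ · ω) (G₁.monotone_τ ω)
    (monotone_mergeTime G₁ G₂ ω) (by rw [mergeTime_zero]; exact zero_le) hM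
    fun l hl => ⟨(activeIndex_le G₁ G₂ l ω).trans_lt hl, τ_activeIndex_le G₁ G₂ l ω,
      mergeTime_succ_le_τ_activeIndex_succ G₁ G₂ l ω⟩

theorem integ_merge_of_τ_eq_top {ω : PricePath d} {L₁ L₂ : ℕ}
    (h₁ : ∀ l, L₁ ≤ l → G₁.τ l ω = ⊤) (h₂ : ∀ l, L₂ ≤ l → G₂.τ l ω = ⊤) (t : ℝ) :
    integ (merge G₁ G₂) t ω = integ G₁ t ω + integ G₂ t ω := by
  set M := L₁ + L₂
  have hρ : ∀ l, M ≤ l → mergeTime G₁ G₂ l ω = ⊤ := fun l hl => by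
    rw [mergeTime_eq_of_stable G₁ G₂ (fun l hl => (h₁ l hl).trans (h₁ L₁ le_rfl).symm)
      (fun l hl => (h₂ l hl).trans (h₂ L₂ le_rfl).symm) hl, h₁ L₁ le_rfl, h₂ L₂ le_rfl, inf_idem]
  have hρM : mergeTime G₁ G₂ M ω = ⊤ := hρ M le_rfl
  rw [integ_eq_sum_range (merge G₁ G₂) (M := M) fun l hl => (hρ l hl).trans hρM.symm,
    integ_eq_sum_range G₁ (M := M) fun l hl => (h₁ l (by omega)).trans (h₁ M (by omega)).symm,
    integ_eq_sum_range G₂ (M := M) fun l hl => (h₂ l (by omega)).trans (h₂ M (by omega)).symm,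
    ← sum_range_sub_activeIndex G₁ G₂ (fun p x => G₁.g p ω ⬝ᵥ stopVal ω x t) (hρM ▸ le_top),
    ← sum_range_sub_activeIndex G₂ G₁ (fun p x => G₂.g p ω ⬝ᵥ stopVal ω x t)
      (mergeTime_comm G₁ G₂ ▸ hρM ▸ le_top),
    mergeTime_comm G₂ G₁, ← Finset.sum_add_distrib]
  refine Finset.sum_congr rfl fun l _ => ?_
  simp only [merge, add_dotProduct]
  abel

instance : Add (SimpleStrategy d T) :=
  ⟨fun G₁ G₂ => merge G₁.normalize G₂.normalize⟩

theorem integ_add (t : ℝ) (ω : PricePath d) :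
    integ (G₁ + G₂) t ω = integ G₁ t ω + integ G₂ t ω := by
  rw [← G₁.integ_normalize, ← G₂.integ_normalize]
  exact integ_merge_of_τ_eq_top _ _ (L₁ := G₁.stabIndex ω + 1) (L₂ := G₂.stabIndex ω + 1)
    (fun _ hl => G₁.normalize_τ_of_lt hl) (fun _ hl => G₂.normalize_τ_of_lt hl) t

def partialSum (G : ℕ → SimpleStrategy d T) : ℕ → SimpleStrategy d T
  | 0 => G 0
  | n + 1 => partialSum G n + G (n + 1)

theorem integ_partialSum (G : ℕ → SimpleStrategy d T) (n : ℕ) (t : ℝ) (ω : PricePath d) :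
    integ (partialSum G n) t ω = ∑ k ∈ Finset.range (n + 1), integ (G k) t ω := by
  induction n with
  | zero => simp [partialSum]
  | succ n ih => rw [partialSum, integ_add, ih, Finset.sum_range_succ _ (n + 1)]

theorem admissible_partialSum {G : ℕ → SimpleStrategy d T} {c : ℕ → ℝ} {C : ℝ} {n : ℕ}
    (hG : ∀ k, Admissible (c k) (G k)) (hC : ∑ k ∈ Finset.range (n + 1), c k ≤ C) :
    Admissible C (partialSum G n) := by
  intro ω t ht
  rw [integ_partialSum]
  calc -C ≤ ∑ k ∈ Finset.range (n + 1), -c k := by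
        rw [Finset.sum_neg_distrib]
        exact neg_le_neg hC
    _ ≤ _ := Finset.sum_le_sum fun k _ => hG k ω t ht

end SimpleStrategy

namespace EReal

theorem coe_ennreal_finset_sum {ι : Type*} (s : Finset ι) (f : ι → ℝ≥0∞) :
    ((∑ k ∈ s, f k : ℝ≥0∞) : EReal) = ∑ k ∈ s, (f k : EReal) :=
  map_sum (⟨⟨(↑), coe_ennreal_zero⟩, coe_ennreal_add⟩ : ℝ≥0∞ →+ EReal) f s

theorem coe_finset_sum {ι : Type*} (s : Finset ι) (f : ι → ℝ) :
    ((∑ k ∈ s, f k : ℝ) : EReal) = ∑ k ∈ s, (f k : EReal) :=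
  map_sum (⟨⟨(↑), coe_zero⟩, coe_add⟩ : ℝ →+ EReal) f s

theorem coe_ennreal_tsum_le {f : ℕ → ℝ≥0∞} {x : EReal}
    (h : ∀ K, ((∑ k ∈ Finset.range K, f k : ℝ≥0∞) : EReal) ≤ x) :
    ((∑' k, f k : ℝ≥0∞) : EReal) ≤ x := by
  have hx : 0 ≤ x := by simpa using h 0
  rw [← coe_toENNReal hx, coe_ennreal_le_coe_ennreal_iff]
  exact ENNReal.tsum_le_of_sum_range_le fun K => by
    simpa only [toENNReal_coe] using toENNReal_le_toENNReal (h K)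

theorem finset_sum_liminf_le_liminf_sum {ι α : Type*} {l : Filter α} (s : Finset ι)
    (u : ι → α → EReal) :
    ∑ k ∈ s, liminf (u k) l ≤ liminf (fun n => ∑ k ∈ s, u k n) l := by
  induction s using Finset.cons_induction with
  | empty => simpa using le_liminf_of_le (h := Eventually.of_forall fun _ => le_rfl)
  | cons a s ha ih =>
    simp only [Finset.sum_cons]
    exact (add_le_add le_rfl ih).trans le_liminf_add

end EReal

theorem sum_liminf_le_liminf_partialSum {H : ℕ → ℕ → SimpleStrategy d T} {c : ℕ → ℝ} {C : ℝ}
    (hH : ∀ k n, Admissible (c k) (H k n)) (hC : ∀ n, ∑ k ∈ Finset.range (n + 1), c k ≤ C)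
    {t : ℝ} (ht : t ∈ Icc 0 T) (ω : PricePath d) (K : ℕ) :
    ∑ k ∈ Finset.range K, liminf (fun n => ((c k + integ (H k n) t ω : ℝ) : EReal)) atTop ≤
      liminf (fun n => ((C + integ (SimpleStrategy.partialSum (H · n) n) t ω : ℝ) : EReal))
        atTop := by
  refine (EReal.finset_sum_liminf_le_liminf_sum _ _).trans
    (liminf_le_liminf (eventually_atTop.2 ⟨K, fun n hn => ?_⟩))
  rw [← EReal.coe_finset_sum, EReal.coe_le_coe_iff, SimpleStrategy.integ_partialSum]
  calc ∑ k ∈ Finset.range K, (c k + integ (H k n) t ω)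
      ≤ ∑ k ∈ Finset.range (n + 1), (c k + integ (H k n) t ω) :=
        Finset.sum_le_sum_of_subset_of_nonneg (Finset.range_subset_range.2 (by omega))
          fun k _ _ => neg_le_iff_add_nonneg'.1 (hH k n ω t ht)
    _ ≤ C + ∑ k ∈ Finset.range (n + 1), integ (H k n) t ω := by
        rw [Finset.sum_add_distrib]
        exact add_le_add_left (hC n) _

theorem VovkNull.iUnion (hT : 0 ≤ T) {A : ℕ → Set (PricePath d)} (hA : ∀ k, VovkNull T (A k)) :
    VovkNull T (⋃ k, A k) := by
  intro ε hε
  obtain ⟨c, hc, C, hcC, hCε⟩ := posSumOfEncodable hε ℕ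
  choose H hH hsup using fun k => hA k (c k) (hc k)
  have hpartial : ∀ n, ∑ k ∈ Finset.range (n + 1), c k ≤ ε := fun n =>
    (sum_le_hasSum _ (fun k _ => (hc k).le) hcC).trans hCε
  refine ⟨fun n => SimpleStrategy.partialSum (H · n) n,
    fun n => SimpleStrategy.admissible_partialSum (fun k => hH k n) (hpartial n), ?_⟩
  intro ω hω
  obtain ⟨m, hm⟩ := mem_iUnion.1 hω
  have hnonneg : ∀ k, 0 ≤ liminf (fun n => ((c k + integ (H k n) T ω : ℝ) : EReal)) atTop :=
    fun k => le_liminf_of_le (h := Eventually.of_forall fun n =>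
      EReal.coe_nonneg.2 (neg_le_iff_add_nonneg'.1 (hH k n ω T ⟨hT, le_rfl⟩)))
  calc (1 : EReal) ≤ liminf (fun n => ((c m + integ (H m n) T ω : ℝ) : EReal)) atTop :=
        hsup m ω hm
    _ ≤ ∑ k ∈ Finset.range (m + 1), liminf (fun n => ((c k + integ (H k n) T ω : ℝ) : EReal))
          atTop :=
        Finset.single_le_sum (fun k _ => hnonneg k) (Finset.self_mem_range_succ m)
    _ ≤ _ := sum_liminf_le_liminf_partialSum hH hpartial ⟨hT, le_rfl⟩ ω (m + 1)

def Superhedges (T : ℝ) (Z : ℝ → PricePath d → ℝ≥0∞) (lam : ℝ) (H : ℕ → SimpleStrategy d T)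
    (Ω' : Set (PricePath d)) : Prop :=
  (∀ n, Admissible lam (H n)) ∧ ∀ ω ∈ Ω', ∀ τ : PricePath d → ℝ, IsStoppingTime01 T τ →
    ((Z (τ ω) ω : ℝ≥0∞) : EReal) ≤
      liminf (fun n => ((lam + integ (H n) (τ ω) ω : ℝ) : EReal)) atTop

theorem outerExp_le_ofReal {Z : ℝ → PricePath d → ℝ≥0∞} {lam : ℝ} {H : ℕ → SimpleStrategy d T}
    {Ω' : Set (PricePath d)} (hlam : 0 < lam) (hnull : VovkNull T Ω'ᶜ)
    (hH : Superhedges T Z lam H Ω') : outerExp d T Z ≤ ENNReal.ofReal lam :=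
  sInf_le ⟨lam, hlam, rfl, Ω', hnull, H, hH⟩

theorem exists_superhedges_of_outerExp_lt {Z : ℝ → PricePath d → ℝ≥0∞} {c : ℝ≥0∞}
    (h : outerExp d T Z < c) :
    ∃ lam, 0 < lam ∧ ENNReal.ofReal lam < c ∧
      ∃ Ω', VovkNull T Ω'ᶜ ∧ ∃ H : ℕ → SimpleStrategy d T, Superhedges T Z lam H Ω' := by
  obtain ⟨_, ⟨lam, hlam, rfl, Ω', hnull, H, hH⟩, hlt⟩ := sInf_lt_iff.1 h
  exact ⟨lam, hlam, hlt, Ω', hnull, H, hH⟩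

theorem Superhedges.tsum {Z : ℕ → ℝ → PricePath d → ℝ≥0∞} {lam : ℕ → ℝ}
    {H : ℕ → ℕ → SimpleStrategy d T} {Ω' : ℕ → Set (PricePath d)}
    (hH : ∀ k, Superhedges T (Z k) (lam k) (H k) (Ω' k)) (hlam : ∀ k, 0 ≤ lam k)
    (hsum : Summable lam) :
    Superhedges T (fun t ω => ∑' k, Z k t ω) (∑' k, lam k)
      (fun n => SimpleStrategy.partialSum (H · n) n) (⋂ k, Ω' k) := by
  have hpartial : ∀ n, ∑ k ∈ Finset.range (n + 1), lam k ≤ ∑' k, lam k := fun n =>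
    hsum.sum_le_tsum _ fun k _ => hlam k
  refine ⟨fun n => SimpleStrategy.admissible_partialSum (fun k => (hH k).1 n) (hpartial n),
    fun ω hω τ hτ => EReal.coe_ennreal_tsum_le fun K => ?_⟩
  rw [EReal.coe_ennreal_finset_sum]
  exact (Finset.sum_le_sum fun k _ => (hH k).2 ω (mem_iInter.1 hω k) τ hτ).trans
    (sum_liminf_le_liminf_partialSum (fun k => (hH k).1) hpartial (hτ.1 ω) ω K)

end

/-- The outer expectation is countably subadditive. -/
theorem outerExp_countably_subadditive (d : ℕ) (T : ℝ) (hT : 0 < T)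
    (Z : ℕ → ℝ → PricePath d → ℝ≥0∞) :
    outerExp d T (fun t ω => ∑' k : ℕ, Z k t ω) ≤ ∑' k : ℕ, outerExp d T (Z k) := by
  refine ENNReal.le_of_forall_pos_le_add fun ε hε hfin => ?_
  obtain ⟨δ, hδ, hδsum⟩ := ENNReal.exists_pos_sum_of_countable (ENNReal.coe_ne_zero.2 hε.ne') ℕ
  have hlt : ∀ k, outerExp d T (Z k) < outerExp d T (Z k) + δ k := fun k =>
    ENNReal.lt_add_right (ne_top_of_le_ne_top hfin.ne (ENNReal.le_tsum k))
      (ENNReal.coe_ne_zero.2 (hδ k).ne')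
  choose lam hlam hlamlt Ω' hnull H hH using fun k => exists_superhedges_of_outerExp_lt (hlt k)
  have hcost : ∑' k, ENNReal.ofReal (lam k) ≤ ∑' k, outerExp d T (Z k) + ε :=
    calc ∑' k, ENNReal.ofReal (lam k) ≤ ∑' k, (outerExp d T (Z k) + δ k) :=
          ENNReal.tsum_le_tsum fun k => (hlamlt k).le
      _ = ∑' k, outerExp d T (Z k) + ∑' k, (δ k : ℝ≥0∞) := ENNReal.tsum_add
      _ ≤ _ := add_le_add_right hδsum.le _
  have hsum : Summable lam := by
    refine (ENNReal.summable_toReal (hcost.trans_lt ?_).ne).congr fun k =>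
      ENNReal.toReal_ofReal (hlam k).le
    exact ENNReal.add_lt_top.2 ⟨hfin, ENNReal.coe_lt_top⟩
  calc outerExp d T (fun t ω => ∑' k, Z k t ω) ≤ ENNReal.ofReal (∑' k, lam k) :=
        outerExp_le_ofReal (hsum.tsum_pos (fun k => (hlam k).le) 0 (hlam 0))
          (by simpa only [compl_iInter] using VovkNull.iUnion hT.le hnull)
          (Superhedges.tsum hH (fun k => (hlam k).le) hsum)
    _ = ∑' k, ENNReal.ofReal (lam k) := ENNReal.ofReal_tsum_of_nonneg (fun k => (hlam k).le) hsum
    _ ≤ _ := hcost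
end
end
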